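/- (Unique minimization by the quantile) Let τ ∈ (0,1) and let Y be a real-valued random variable and q ∈ ℝ. Set F(s) := P(Y ≤ q + s) and suppose F(0) = τ and that there exist c₀ > 0 and r₀ > 0 such that F(t) − F(s) ≥ c₀(t − s) for all −r₀ ≤ s ≤ t ≤ r₀. Then q is the unique minimizer of θ ↦ E[ρ_τ(Y − θ) − ρ_τ(Y − q)]: for every θ ≠ q, E[ρ_τ(Y − θ) − ρ_τ(Y − q)] > 0. -/

import Mathlib

open MeasureTheory Set

/-- The pinball (check) loss `ρ_τ(u) = u (τ - 1{u < 0})`. -/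
noncomputable def pinball (τ u : ℝ) : ℝ := u * (τ - if u < 0 then 1 else 0)

/-!
The right derivative of `v ↦ ρ_τ(u - v)` is `1{u ≤ v} - τ`, so Knight's identity
`ρ_τ(u - v) - ρ_τ(u) = ∫₀^v (1{u ≤ s} - τ) ds` holds pointwise. Taking expectations and
swapping the integrals gives `E[ρ_τ(Y - θ) - ρ_τ(Y - q)] = ∫₀^{θ-q} (F(s) - τ) ds`. The local
growth of `F` and its monotonicity make `F(s) - τ` strictly positive for `s > 0` and strictly
negative for `s < 0`, so this integral is positive whenever `θ ≠ q`.
-/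

lemma pinball_eq_mul_add_max (τ u : ℝ) : pinball τ u = τ * u + max (-u) 0 := by
  unfold pinball
  split_ifs with h
  · rw [max_eq_left (by linarith)]; ring
  · rw [max_eq_right (by linarith)]; ring

lemma continuous_pinball (τ : ℝ) : Continuous (pinball τ) := by
  simp_rw [funext (pinball_eq_mul_add_max τ)]
  fun_prop

lemma hasDerivWithinAt_max_sub_zero_Ioi (u v : ℝ) :
    HasDerivWithinAt (fun w => max (w - u) 0) ((Ici u).indicator 1 v) (Ioi v) v := by
  by_cases h : u ≤ v
  · rw [indicator_of_mem (mem_Ici.2 h), Pi.one_apply]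
    refine ((hasDerivAt_id v).sub_const u).hasDerivWithinAt.congr (fun w hw => ?_) ?_
    · exact max_eq_left (by simp only [mem_Ioi] at hw; linarith)
    · exact max_eq_left (by simpa using h)
  · rw [indicator_of_notMem (by simpa using h)]
    refine (hasDerivWithinAt_const v (Ioi v) (0 : ℝ)).congr_of_eventuallyEq ?_ ?_
    · filter_upwards [nhdsWithin_le_nhds (Iio_mem_nhds (not_le.1 h))] with w hw
      exact max_eq_right (by simp only [mem_Iio] at hw; linarith)
    · exact max_eq_right (by linarith [not_le.1 h])

lemma hasDerivWithinAt_pinball_sub_Ioi (τ u v : ℝ) :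
    HasDerivWithinAt (fun w => pinball τ (u - w)) ((Ici u).indicator 1 v - τ) (Ioi v) v := by
  have hsplit : (fun w => pinball τ (u - w)) = fun w => τ * (u - w) + max (w - u) 0 := by
    funext w; rw [pinball_eq_mul_add_max, neg_sub]
  have hlin : HasDerivAt (fun w => τ * (u - w)) (-τ) v := by
    simpa using ((hasDerivAt_id v).const_sub u).const_mul τ
  rw [hsplit, sub_eq_neg_add]
  exact hlin.hasDerivWithinAt.add (hasDerivWithinAt_max_sub_zero_Ioi u v)

lemma monotone_indicator_Ici_one (u : ℝ) : Monotone ((Ici u).indicator (1 : ℝ → ℝ)) :=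
  fun s t hst => by
    by_cases hs : u ≤ s
    · rw [indicator_of_mem (mem_Ici.2 hs), indicator_of_mem (mem_Ici.2 (hs.trans hst))]
      exact le_rfl
    · rw [indicator_of_notMem (by simpa using hs)]
      exact indicator_nonneg (fun _ _ => zero_le_one) t

lemma pinball_sub_sub_pinball_eq_integral (τ u v : ℝ) :
    pinball τ (u - v) - pinball τ u = ∫ s in 0..v, ((Ici u).indicator 1 s - τ) := by
  rw [intervalIntegral.integral_eq_sub_of_hasDeriv_right
    ((continuous_pinball τ).comp (continuous_sub_left u)).continuousOn
    (fun w _ => hasDerivWithinAt_pinball_sub_Ioi τ u w)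
    ((monotone_indicator_Ici_one u).intervalIntegrable.sub intervalIntegrable_const)]
  simp only [Function.comp_apply, sub_zero]

lemma integral_pinball_sub_pinball_eq_intervalIntegral {Ω : Type*} [MeasurableSpace Ω]
    (μ : Measure Ω) [IsProbabilityMeasure μ] (τ : ℝ) {Y : Ω → ℝ} (hY : Measurable Y) (q θ : ℝ) :
    ∫ ω, (pinball τ (Y ω - θ) - pinball τ (Y ω - q)) ∂μ
      = ∫ s in 0..(θ - q), ((μ {ω | Y ω ≤ q + s}).toReal - τ) := by
  have hknight : ∀ ω, pinball τ (Y ω - θ) - pinball τ (Y ω - q)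
      = ∫ s in 0..(θ - q), ((Ici (Y ω - q)).indicator 1 s - τ) := fun ω => by
    rw [← pinball_sub_sub_pinball_eq_integral, sub_sub_sub_cancel_right]
  have : IsFiniteMeasure (volume.restrict (uIoc 0 (θ - q))) :=
    isFiniteMeasure_restrict.2 (by simp [Real.volume_uIoc])
  have hint : Integrable (Function.uncurry fun s ω => (Ici (Y ω - q)).indicator 1 s - τ)
      ((volume.restrict (uIoc 0 (θ - q))).prod μ) :=
    ((integrable_const (1 : ℝ)).indicator
      (measurableSet_le ((hY.comp measurable_snd).sub_const q) measurable_fst)).sub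
      (integrable_const τ)
  have hcdf : ∀ s, ∫ ω, ((Ici (Y ω - q)).indicator 1 s - τ) ∂μ
      = (μ {ω | Y ω ≤ q + s}).toReal - τ := fun s => by
    have hs : MeasurableSet {ω | Y ω ≤ q + s} := measurableSet_le hY measurable_const
    have hind : ∀ ω,
        (Ici (Y ω - q)).indicator (1 : ℝ → ℝ) s = {ω | Y ω ≤ q + s}.indicator 1 ω := fun ω => by
      simp only [indicator_apply, mem_Ici, mem_ofPred_eq, sub_le_iff_le_add', Pi.one_apply]
    simp_rw [hind]
    rw [integral_sub _ (integrable_const τ), integral_indicator_one hs, integral_const,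
      probReal_univ, one_smul, measureReal_def]
    exact (integrable_const 1).indicator hs
  simp_rw [hknight]
  rw [← intervalIntegral_integral_swap hint]
  simp_rw [hcdf]

lemma Monotone.lt_of_linear_growth {F : ℝ → ℝ} (hF : Monotone F) {c₀ r₀ : ℝ} (hc₀ : 0 < c₀)
    (hr₀ : 0 < r₀) (hgrow : ∀ s t : ℝ, -r₀ ≤ s → s ≤ t → t ≤ r₀ → c₀ * (t - s) ≤ F t - F s) :
    (∀ t, 0 < t → F 0 < F t) ∧ ∀ s, s < 0 → F s < F 0 := by
  constructor
  · intro t ht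
    have hgrow_t := hgrow 0 (min t r₀) (by linarith) (le_min ht.le hr₀.le) (min_le_right _ _)
    have hgain : 0 < c₀ * (min t r₀ - 0) := mul_pos hc₀ (by simpa using lt_min ht hr₀)
    exact (by linarith : F 0 < F (min t r₀)).trans_le (hF (min_le_left _ _))
  · intro s hs
    have hgrow_s := hgrow (max s (-r₀)) 0 (le_max_right _ _) (max_le hs.le (by linarith)) hr₀.le
    have hgain : 0 < c₀ * (0 - max s (-r₀)) := mul_pos hc₀ (by simpa using And.intro hs hr₀)
    exact (hF (le_max_left _ _)).trans_lt (by linarith)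

lemma Monotone.intervalIntegral_sub_apply_zero_pos {F : ℝ → ℝ} (hF : Monotone F)
    (hpos : ∀ t, 0 < t → F 0 < F t) (hneg : ∀ s, s < 0 → F s < F 0) {v : ℝ} (hv : v ≠ 0) :
    0 < ∫ s in 0..v, (F s - F 0) := by
  have hint : IntervalIntegrable (fun s => F s - F 0) volume 0 v :=
    hF.intervalIntegrable.sub intervalIntegrable_const
  rcases hv.lt_or_gt with hv | hv
  · rw [intervalIntegral.integral_symm, ← intervalIntegral.integral_neg]
    exact intervalIntegral.intervalIntegral_pos_of_pos_on hint.symm.neg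
      (fun s hs => neg_pos.2 (sub_neg.2 (hneg s hs.2))) hv
  · exact intervalIntegral.intervalIntegral_pos_of_pos_on hint
      (fun s hs => sub_pos.2 (hpos s hs.1)) hv

theorem quantile_unique_minimizer_general
    {Ω : Type*} [MeasurableSpace Ω] (μ : Measure Ω) [IsProbabilityMeasure μ]
    (τ : ℝ)
    (Y : Ω → ℝ) (hY : Measurable Y) (q : ℝ)
    (c₀ r₀ : ℝ) (hc₀ : 0 < c₀) (hr₀ : 0 < r₀)
    (hF0 : (μ {ω | Y ω ≤ q + 0}).toReal = τ)
    (hgrow : ∀ s t : ℝ, -r₀ ≤ s → s ≤ t → t ≤ r₀ →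
      c₀ * (t - s) ≤ (μ {ω | Y ω ≤ q + t}).toReal - (μ {ω | Y ω ≤ q + s}).toReal) :
    ∀ θ : ℝ, θ ≠ q →
      0 < ∫ ω, (pinball τ (Y ω - θ) - pinball τ (Y ω - q)) ∂μ := by
  intro θ hθ
  set F : ℝ → ℝ := fun s => (μ {ω | Y ω ≤ q + s}).toReal
  have hF : Monotone F := fun s t hst =>
    ENNReal.toReal_mono (measure_ne_top _ _)
      (measure_mono fun ω (h : Y ω ≤ q + s) => (by linarith : Y ω ≤ q + t))
  obtain ⟨hpos, hneg⟩ := hF.lt_of_linear_growth hc₀ hr₀ hgrow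
  rw [integral_pinball_sub_pinball_eq_intervalIntegral μ τ hY q θ, ← hF0]
  exact hF.intervalIntegral_sub_apply_zero_pos hpos hneg (sub_ne_zero.2 hθ)

/-- Unique minimization by the quantile: if `F(s) = P(Y ≤ q + s)` satisfies `F(0) = τ` and
grows at rate at least `c₀` on `[−r₀, r₀]`, then `q` uniquely minimizes the pinball risk:
`E[ρ_τ(Y − θ) − ρ_τ(Y − q)] > 0` for every `θ ≠ q`. -/
theorem quantile_unique_minimizer
    {Ω : Type*} [MeasurableSpace Ω] (μ : Measure Ω) [IsProbabilityMeasure μ]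
    (τ : ℝ) (hτ : τ ∈ Set.Ioo (0:ℝ) 1)
    (Y : Ω → ℝ) (hY : Measurable Y) (q : ℝ)
    (c₀ r₀ : ℝ) (hc₀ : 0 < c₀) (hr₀ : 0 < r₀)
    (hF0 : (μ {ω | Y ω ≤ q + 0}).toReal = τ)
    (hgrow : ∀ s t : ℝ, -r₀ ≤ s → s ≤ t → t ≤ r₀ →
      c₀ * (t - s) ≤ (μ {ω | Y ω ≤ q + t}).toReal - (μ {ω | Y ω ≤ q + s}).toReal) :
    ∀ θ : ℝ, θ ≠ q →
      0 < ∫ ω, (pinball τ (Y ω - θ) - pinball τ (Y ω - q)) ∂μ :=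
  quantile_unique_minimizer_general μ τ Y hY q c₀ r₀ hc₀ hr₀ hF0 hgrow
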